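/- For 0 ≤ a ≤ 1, 1 + Σ_{n≥1} ((1/2)_n³/(1)_n³)(-a²)^n = (4/π²)[K(√((1-√(1+a²))/2))]². -/

import Mathlib

open MeasureTheory Real Filter

/-- Pochhammer symbol `(x)_n`. -/
noncomputable def poch (x : ℝ) (n : ℕ) : ℝ := ∏ i ∈ Finset.range n, (x + i)

/-- Complete elliptic integral of the first kind. -/
noncomputable def K (k : ℝ) : ℝ :=
  ∫ θ in Set.Ioo 0 (Real.pi / 2), 1 / Real.sqrt (1 - k ^ 2 * Real.sin θ ^ 2)

/-- `K` as a function of the squared modulus, via the hypergeometric series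
`K(k) = (π/2) ₂F₁(1/2,1/2;1;k²)`. -/
noncomputable def Ksq (m : ℝ) : ℝ :=
  (Real.pi / 2) * ∑' n : ℕ, poch (1/2) n ^ 2 / poch 1 n ^ 2 * m ^ n

/-- Legendre polynomial `P_n(x)`. -/
noncomputable def P (n : ℕ) (x : ℝ) : ℝ :=
  (1 / 2 ^ n) * ∑ k ∈ Finset.range (n + 1), (n.choose k : ℝ) ^ 2 * (x - 1) ^ (n - k) * (x + 1) ^ k

section Aux
open Finset

/-- central binomial coefficient as a real number -/
noncomputable def cb (n : ℕ) : ℝ := ((2*n).choose n : ℝ)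

lemma cb_pos (n : ℕ) : 0 < cb n := by
  have h := Nat.choose_pos (show n ≤ 2*n by omega)
  unfold cb; exact_mod_cast h

lemma cb_succ (n : ℕ) : ((n:ℝ)+1) * cb (n+1) = 2*(2*n+1) * cb n := by
  have h := Nat.succ_mul_centralBinom_succ n
  have : ((n+1) * Nat.centralBinom (n+1) : ℕ) = (2 * (2*n+1) * Nat.centralBinom n : ℕ) := h
  unfold cb
  unfold Nat.centralBinom at this
  have := congrArg (fun x : ℕ => (x : ℝ)) this
  push_cast at this ⊢
  linarith [this]

lemma choose_real_succ (n j : ℕ) :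
    ((j:ℝ)+1) * (n.choose (j+1) : ℝ) = ((n:ℝ) - j) * (n.choose j : ℝ) := by
  rcases le_or_gt j n with h | h
  · have := Nat.choose_succ_right_eq n j
    have := congrArg (fun x : ℕ => (x : ℝ)) this
    push_cast [h] at this
    linarith [this]
  · rw [Nat.choose_eq_zero_of_lt h, Nat.choose_eq_zero_of_lt (by omega)]
    ring

lemma choose_real_up (n j : ℕ) :
    ((j:ℝ)+1) * ((n+1).choose (j+1) : ℝ) = ((n:ℝ)+1) * (n.choose j : ℝ) := by
  have := Nat.add_one_mul_choose_eq n j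
  have := congrArg (fun x : ℕ => (x : ℝ)) this
  push_cast at this
  linarith [this]

noncomputable def SL (N k : ℕ) : ℝ := if k ≤ N then cb k^2 * cb (N-k)^2 else 0

noncomputable def GLc (N k : ℕ) : ℝ :=
  if k < N then
    4*(k:ℝ)^2*(2*(k:ℝ)-3*N-4*(N:ℝ)*k+4*(N:ℝ)^2) / ((N-k : ℕ):ℝ)^2 * cb k^2 * cb (N-k-1)^2
  else if k = N then -(N:ℝ)^3 * cb N^2 else 0

lemma cb_ratio (m : ℕ) : cb (m+1) = 2*(2*(m:ℝ)+1) * cb m / ((m:ℝ)+1) := by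
  have h : ((m:ℝ)+1) ≠ 0 := by positivity
  field_simp
  linarith [cb_succ m]

lemma wzL (N k : ℕ) :
    ((N:ℝ)+2)^3 * SL (N+2) k - 8*(2*(N:ℝ)+3)*(2*(N:ℝ)^2+6*N+5) * SL (N+1) k
      + 256*((N:ℝ)+1)^3 * SL N k
    = GLc (N+2) (k+1) - GLc (N+2) k := by
  rcases le_or_gt k N with h | h
  · obtain ⟨m, rfl⟩ : ∃ m, N = k + m := ⟨N - k, by omega⟩
    rw [SL, SL, SL, GLc, GLc, if_pos (by omega), if_pos (by omega), if_pos (by omega),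
      if_pos (by omega), if_pos (by omega)]
    have h1 : k + m + 2 - k = m + 2 := by omega
    have h2 : k + m + 1 - k = m + 1 := by omega
    have h3 : k + m - k = m := by omega
    have h4 : k + m + 2 - (k+1) = m + 1 := by omega
    have h5 : k + m + 2 - (k+1) - 1 = m := by omega
    have h6 : k + m + 2 - k - 1 = m + 1 := by omega
    rw [h5, h6, h4, h1, h2, h3]
    rw [show cb (m+2) = 2*(2*((m:ℝ)+1)+1) * cb (m+1) / ((m:ℝ)+1+1) by
      have := cb_ratio (m+1); push_cast at this ⊢; linarith [this]]
    rw [cb_ratio m, cb_ratio k]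
    push_cast
    have e1 : ((m:ℝ)+1) ≠ 0 := by positivity
    have e2 : ((m:ℝ)+2) ≠ 0 := by positivity
    have e3 : ((k:ℝ)+1) ≠ 0 := by positivity
    field_simp
    ring
  · have : k = N + 1 ∨ k = N + 2 ∨ N + 3 ≤ k := by omega
    rcases this with rfl | rfl | h3
    · rw [SL, SL, SL, GLc, GLc, if_pos (by omega), if_pos (by omega), if_neg (by omega),
        if_neg (by omega), if_pos (by omega), if_pos (by omega)]
      have h3 : N + 2 - (N+1) - 1 = 0 := by omega
      have h1 : N + 2 - (N+1) = 1 := by omega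
      have h2 : N + 1 - (N+1) = 0 := by omega
      rw [h3, h1, h2]
      rw [show cb (N+2) = 2*(2*((N:ℝ)+1)+1) * cb (N+1) / ((N:ℝ)+1+1) by
        have := cb_ratio (N+1); push_cast at this ⊢; linarith [this]]
      rw [show cb 1 = (2:ℝ) by unfold cb; norm_num,
        show cb 0 = (1:ℝ) by unfold cb; norm_num]
      push_cast
      have e1 : ((N:ℝ)+2) ≠ 0 := by positivity
      field_simp
      ring
    · rw [SL, SL, SL, GLc, GLc, if_pos (by omega), if_neg (by omega), if_neg (by omega),
        if_neg (by omega), if_neg (by omega), if_neg (by omega), if_pos rfl]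
      have h1 : N + 2 - (N+2) = 0 := by omega
      rw [h1, show cb 0 = (1:ℝ) by unfold cb; norm_num]
      push_cast
      ring
    · rw [SL, SL, SL, GLc, GLc, if_neg (by omega), if_neg (by omega), if_neg (by omega),
        if_neg (by omega), if_neg (by omega), if_neg (by omega), if_neg (by omega)]
      ring

noncomputable def SR (N n : ℕ) : ℝ :=
  if n ≤ N then (-16:ℝ)^(N-n) * cb n^3 * (n.choose (N-n) : ℝ) else 0

lemma wzR (N n : ℕ) :
    ((N:ℝ)+2)^3 * SR (N+2) n - 8*(2*(N:ℝ)+3)*(2*(N:ℝ)^2+6*N+5) * SR (N+1) n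
      + 256*((N:ℝ)+1)^3 * SR N n
    = (-((N:ℝ)+2)*((n:ℝ)+1)^2 * SR (N+2) (n+1)) - (-((N:ℝ)+2)*(n:ℝ)^2 * SR (N+2) n) := by
  have hj1 : ∀ j : ℕ, ((j:ℝ)+1) ≠ 0 := fun j => by positivity
  rcases le_or_gt n N with h | h
  · obtain ⟨j, rfl⟩ : ∃ j, N = n + j := ⟨N - n, by omega⟩
    rw [SR, SR, SR, SR, if_pos (by omega), if_pos (by omega), if_pos (by omega),
      if_pos (by omega)]
    have h1 : n + j + 2 - n = j + 2 := by omega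
    have h2 : n + j + 1 - n = j + 1 := by omega
    have h3 : n + j - n = j := by omega
    have h4 : n + j + 2 - (n+1) = j + 1 := by omega
    rw [h1, h2, h3, h4]
    have c4 : cb (n+1) = 2*(2*(n:ℝ)+1) * cb n / ((n:ℝ)+1) := by
      field_simp; linarith [cb_succ n]
    have c1 : (n.choose (j+1) : ℝ) = ((n:ℝ)-j) * (n.choose j) / ((j:ℝ)+1) := by
      field_simp; linarith [choose_real_succ n j]
    have c2 : (n.choose (j+2) : ℝ) = ((n:ℝ)-((j:ℝ)+1)) * (n.choose (j+1)) / ((j:ℝ)+2) := by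
      have := choose_real_succ n (j+1)
      push_cast at this
      field_simp
      linarith [this]
    have c3 : ((n+1).choose (j+1) : ℝ) = ((n:ℝ)+1) * (n.choose j) / ((j:ℝ)+1) := by
      field_simp; linarith [choose_real_up n j]
    rw [c2, c1, c3, c4]
    push_cast
    have h2' : ((j:ℝ)+2) ≠ 0 := by positivity
    have hn1 : ((n:ℝ)+1) ≠ 0 := by positivity
    field_simp
    ring
  · have : n = N + 1 ∨ n = N + 2 ∨ N + 3 ≤ n := by omega
    rcases this with rfl | rfl | h3
    · rw [SR, SR, SR, SR, if_pos (by omega), if_pos (by omega), if_neg (by omega),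
        if_pos (by omega)]
      have e1 : N + 2 - (N+1) = 1 := by omega
      have e2 : N + 1 - (N+1) = 0 := by omega
      have e3 : N + 2 - (N+1+1) = 0 := by omega
      rw [e1, e2, e3]
      have c4 : cb (N+1+1) = 2*(2*((N:ℝ)+1)+1) * cb (N+1) / ((N:ℝ)+1+1) := by
        have := cb_succ (N+1)
        push_cast at this ⊢
        field_simp
        linarith [this]
      rw [c4]
      simp only [Nat.choose_one_right, Nat.choose_zero_right, Nat.choose_self]
      push_cast
      have hn2 : ((N:ℝ)+2) ≠ 0 := by positivity
      field_simp
      ring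
    · rw [SR, SR, SR, SR, if_pos (by omega), if_neg (by omega), if_neg (by omega),
        if_neg (by omega)]
      have e1 : N + 2 - (N+2) = 0 := by omega
      rw [e1]
      simp only [Nat.choose_zero_right]
      push_cast
      ring
    · rw [SR, SR, SR, SR, if_neg (by omega), if_neg (by omega), if_neg (by omega),
        if_neg (by omega)]
      ring

noncomputable def LcS (N : ℕ) : ℝ := ∑ k ∈ range (N+1), SL N k
noncomputable def RcS (N : ℕ) : ℝ := ∑ n ∈ range (N+1), SR N n

lemma sum_SL_ext (M N : ℕ) (h : N + 1 ≤ M) : ∑ k ∈ range M, SL N k = LcS N := by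
  rw [LcS]
  refine (Finset.sum_subset (by intro x hx; simp only [mem_range] at *; omega) ?_).symm
  intro x _ hx
  simp only [mem_range] at hx
  rw [SL, if_neg (by omega)]

lemma sum_SR_ext (M N : ℕ) (h : N + 1 ≤ M) : ∑ n ∈ range M, SR N n = RcS N := by
  rw [RcS]
  refine (Finset.sum_subset (by intro x hx; simp only [mem_range] at *; omega) ?_).symm
  intro x _ hx
  simp only [mem_range] at hx
  rw [SR, if_neg (by omega)]

lemma recL (N : ℕ) :
    ((N:ℝ)+2)^3 * LcS (N+2) - 8*(2*(N:ℝ)+3)*(2*(N:ℝ)^2+6*N+5) * LcS (N+1)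
      + 256*((N:ℝ)+1)^3 * LcS N = 0 := by
  have key : ∑ k ∈ range (N+3),
      (((N:ℝ)+2)^3 * SL (N+2) k - 8*(2*(N:ℝ)+3)*(2*(N:ℝ)^2+6*N+5) * SL (N+1) k
        + 256*((N:ℝ)+1)^3 * SL N k)
      = GLc (N+2) (N+3) - GLc (N+2) 0 := by
    rw [Finset.sum_congr rfl (fun k _ => wzL N k)]
    exact Finset.sum_range_sub (fun k => GLc (N+2) k) (N+3)
  have hz1 : GLc (N+2) (N+3) = 0 := by
    rw [GLc, if_neg (by omega), if_neg (by omega)]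
  have hz0 : GLc (N+2) 0 = 0 := by
    rw [GLc, if_pos (by omega)]
    push_cast
    ring
  rw [hz1, hz0] at key
  simp only [Finset.sum_add_distrib, Finset.sum_sub_distrib, ← Finset.mul_sum] at key
  rw [sum_SL_ext (N+3) (N+2) (by omega), sum_SL_ext (N+3) (N+1) (by omega),
    sum_SL_ext (N+3) N (by omega)] at key
  linarith [key]

lemma recR (N : ℕ) :
    ((N:ℝ)+2)^3 * RcS (N+2) - 8*(2*(N:ℝ)+3)*(2*(N:ℝ)^2+6*N+5) * RcS (N+1)
      + 256*((N:ℝ)+1)^3 * RcS N = 0 := by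
  have key : ∑ n ∈ range (N+3),
      (((N:ℝ)+2)^3 * SR (N+2) n - 8*(2*(N:ℝ)+3)*(2*(N:ℝ)^2+6*N+5) * SR (N+1) n
        + 256*((N:ℝ)+1)^3 * SR N n)
      = (fun n : ℕ => -((N:ℝ)+2)*(n:ℝ)^2 * SR (N+2) n) (N+3)
        - (fun n : ℕ => -((N:ℝ)+2)*(n:ℝ)^2 * SR (N+2) n) 0 := by
    rw [Finset.sum_congr rfl (fun n _ => wzR N n)]
    rw [Finset.sum_congr rfl (fun (n : ℕ) _ => by
      show (-((N:ℝ)+2)*((n:ℝ)+1)^2 * SR (N+2) (n+1)) - (-((N:ℝ)+2)*(n:ℝ)^2 * SR (N+2) n)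
        = (fun n : ℕ => -((N:ℝ)+2)*(n:ℝ)^2 * SR (N+2) n) (n+1)
          - (fun n : ℕ => -((N:ℝ)+2)*(n:ℝ)^2 * SR (N+2) n) n
      push_cast
      ring)]
    exact Finset.sum_range_sub (fun n : ℕ => -((N:ℝ)+2)*(n:ℝ)^2 * SR (N+2) n) (N+3)
  have hz1 : SR (N+2) (N+3) = 0 := by rw [SR, if_neg (by omega)]
  simp only [hz1] at key
  norm_num at key
  simp only [Finset.sum_add_distrib, Finset.sum_sub_distrib, ← Finset.mul_sum] at key
  rw [sum_SR_ext (N+3) (N+2) (by omega), sum_SR_ext (N+3) (N+1) (by omega),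
    sum_SR_ext (N+3) N (by omega)] at key
  linarith [key]

lemma core_identity (N : ℕ) : LcS N = RcS N := by
  have H : ∀ M, LcS M = RcS M ∧ LcS (M+1) = RcS (M+1) := by
    intro M
    induction M with
    | zero =>
      constructor
      · unfold LcS RcS SL SR cb
        norm_num
      · unfold LcS RcS SL SR cb
        norm_num [Finset.sum_range_succ]
    | succ n ih =>
      refine ⟨ih.2, ?_⟩
      have rL := recL n
      have rR := recR n
      rw [ih.1, ih.2] at rL
      have h3 : ((n:ℝ)+2)^3 ≠ 0 := by positivity
      have : ((n:ℝ)+2)^3 * LcS (n+2) = ((n:ℝ)+2)^3 * RcS (n+2) := by linarith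
      have := mul_left_cancel₀ h3 this
      convert this using 2 <;> push_cast <;> ring
  exact (H N).1

lemma poch_succ (x : ℝ) (n : ℕ) : poch x (n+1) = poch x n * (x + n) :=
  Finset.prod_range_succ _ _

lemma poch_one (n : ℕ) : poch 1 n = (n.factorial : ℝ) := by
  induction n with
  | zero => simp [poch]
  | succ k ih =>
    rw [poch_succ, ih, Nat.factorial_succ]
    push_cast
    ring

lemma poch_one_pos (n : ℕ) : 0 < poch 1 n := by
  rw [poch_one]; exact_mod_cast Nat.factorial_pos n

lemma poch_half (n : ℕ) : (4:ℝ)^n * poch (1/2) n = cb n * poch 1 n := by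
  induction n with
  | zero => simp [poch, cb]
  | succ k ih =>
    rw [poch_succ, poch_succ, pow_succ, cb_ratio k]
    have hk : ((k:ℝ)+1) ≠ 0 := by positivity
    field_simp at ih ⊢
    linear_combination (4*(1+2*(k:ℝ))*((k:ℝ)+1)) * ih

lemma pow16 (n : ℕ) : ((4:ℝ)^n)^2 = 16^n := by
  rw [← pow_mul, mul_comm n 2, pow_mul]; norm_num

lemma pow64 (n : ℕ) : ((4:ℝ)^n)^3 = 64^n := by
  rw [← pow_mul, mul_comm n 3, pow_mul]; norm_num

lemma poch_half_eq (n : ℕ) : poch (1/2) n = cb n * poch 1 n / 4^n := by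
  have h4 : ((4:ℝ)^n) ≠ 0 := by positivity
  field_simp
  linarith [poch_half n]

lemma p_eq (n : ℕ) : poch (1/2) n ^ 2 / poch 1 n ^ 2 = cb n^2 / 16^n := by
  have h4 : ((4:ℝ)^n) ≠ 0 := by positivity
  have hp : poch 1 n ≠ 0 := ne_of_gt (poch_one_pos n)
  have h16 : ((16:ℝ)^n) ≠ 0 := by positivity
  rw [poch_half_eq]
  field_simp
  rw [← pow16 n]

lemma d_eq (n : ℕ) : poch (1/2) n ^ 3 / poch 1 n ^ 3 = cb n^3 / 64^n := by
  have h4 : ((4:ℝ)^n) ≠ 0 := by positivity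
  have hp : poch 1 n ≠ 0 := ne_of_gt (poch_one_pos n)
  have h64 : ((64:ℝ)^n) ≠ 0 := by positivity
  rw [poch_half_eq]
  field_simp
  rw [← pow64 n]

lemma cb_sq_bound (n : ℕ) : cb n^2 * ((n:ℝ)+1) ≤ 16^n := by
  induction n with
  | zero => simp [cb]
  | succ k ih =>
    push_cast
    rw [cb_ratio k]
    have hk : ((k:ℝ)+1) ≠ 0 := by positivity
    rw [div_pow, mul_pow]
    rw [div_mul_eq_mul_div, div_le_iff₀ (by positivity)]
    have key : (2*(2*(k:ℝ)+1))^2 * ((k:ℝ)+1+1) ≤ 16 * ((k:ℝ)+1)^3 := by nlinarith [sq_nonneg (k:ℝ)]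
    calc (2*(2*(k:ℝ)+1))^2 * cb k^2 * ((k:ℝ)+1+1)
        = cb k^2 * ((2*(2*(k:ℝ)+1))^2 * ((k:ℝ)+1+1)) := by ring
      _ ≤ cb k^2 * (16 * ((k:ℝ)+1)^3) := by nlinarith [key, sq_nonneg (cb k)]
      _ = 16 * ((k:ℝ)+1) * (cb k^2 * ((k:ℝ)+1)) * ((k:ℝ)+1) := by ring
      _ ≤ 16 * ((k:ℝ)+1) * (16^k) * ((k:ℝ)+1) := by
          have h0 : (0:ℝ) ≤ ((k:ℝ)+1) := by positivity
          have := mul_le_mul_of_nonneg_left ih (show (0:ℝ) ≤ 16*((k:ℝ)+1) by positivity)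
          nlinarith [this, h0]
      _ = 16^(k+1) * ((k:ℝ)+1)^2 := by ring

lemma cb_le (n : ℕ) : cb n^2 ≤ 16^n := by
  have h := cb_sq_bound n
  have h1 : (1:ℝ) ≤ (n:ℝ)+1 := by
    have := Nat.cast_nonneg (α := ℝ) n
    linarith
  nlinarith [sq_nonneg (cb n)]

noncomputable def gb (n : ℕ) : ℝ := ((n:ℝ)+1) ^ (-(3/2) : ℝ)

lemma gb_summable : Summable gb := by
  have h : Summable (fun n : ℕ => (n:ℝ) ^ (-(3/2) : ℝ)) :=
    Real.summable_nat_rpow.mpr (by norm_num)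
  have h2 := (summable_nat_add_iff 1).mpr h
  exact h2.congr (fun n => by unfold gb; push_cast; norm_num)

lemma B_le (n : ℕ) : cb n^3/64^n ≤ gb n := by
  have hy : (0:ℝ) < (n:ℝ)+1 := by positivity
  set x : ℝ := cb n / 4^n with hx
  have hx0 : 0 < x := by rw [hx]; exact div_pos (cb_pos n) (by positivity)
  have hx2 : x^2 ≤ 1/((n:ℝ)+1) := by
    rw [hx, div_pow, pow16, div_le_div_iff₀ (by positivity) hy]
    linarith [cb_sq_bound n]
  have hxs : x ≤ Real.sqrt (1/((n:ℝ)+1)) := (Real.le_sqrt' hx0).mpr hx2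
  have h3 : cb n^3/64^n = x^3 := by rw [hx, div_pow, pow64]
  calc cb n^3/64^n = x^3 := h3
    _ ≤ (Real.sqrt (1/((n:ℝ)+1)))^3 := pow_le_pow_left₀ hx0.le hxs 3
    _ = (1/((n:ℝ)+1)) * Real.sqrt (1/((n:ℝ)+1)) := by
        rw [pow_succ, Real.sq_sqrt (by positivity)]
    _ = (1/((n:ℝ)+1)) ^ ((3:ℝ)/2) := by
        rw [Real.sqrt_eq_rpow]
        nth_rewrite 1 [show (1/((n:ℝ)+1)) = (1/((n:ℝ)+1))^(1:ℝ) from (Real.rpow_one _).symm]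
        rw [← Real.rpow_add (by positivity)]
        norm_num
    _ = gb n := by
        rw [gb, one_div, ← Real.rpow_neg_one ((n:ℝ)+1), ← Real.rpow_mul hy.le]
        norm_num

noncomputable def Fd (m : ℝ) (q : ℕ×ℕ) : ℝ :=
  cb q.1^3/16^q.1 * m^q.1 * (q.1.choose q.2 : ℝ) * (-m)^q.2

lemma Fd_vanish (m : ℝ) (n j : ℕ) (h : j ∉ range (n+1)) : Fd m (n,j) = 0 := by
  simp only [mem_range] at h
  rw [Fd]
  simp [Nat.choose_eq_zero_of_lt (by omega : n < j)]

lemma Fd_row (m : ℝ) (n : ℕ) :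
    ∑' j, Fd m (n,j) = cb n^3/16^n * m^n * (1-m)^n := by
  rw [tsum_eq_sum (s := range (n+1)) (fun j h => Fd_vanish m n j h)]
  have : ∀ j ∈ range (n+1), Fd m (n,j)
      = (cb n^3/16^n * m^n) * ((-m)^j * (1:ℝ)^(n-j) * (n.choose j : ℝ)) := by
    intro j hj
    rw [Fd]
    simp only
    ring
  rw [Finset.sum_congr rfl this, ← Finset.mul_sum, ← add_pow]
  ring_nf

lemma Fd_row_abs (m : ℝ) (hm : m ≤ 0) (n : ℕ) :
    ∑' j, |Fd m (n,j)| = cb n^3/16^n * (-m)^n * (1-m)^n := by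
  rw [tsum_eq_sum (s := range (n+1)) (fun j h => by rw [Fd_vanish m n j h, abs_zero])]
  have : ∀ j ∈ range (n+1), |Fd m (n,j)|
      = (cb n^3/16^n * (-m)^n) * ((-m)^j * (1:ℝ)^(n-j) * (n.choose j : ℝ)) := by
    intro j hj
    rw [Fd, abs_mul, abs_mul, abs_mul]
    rw [abs_of_pos (div_pos (pow_pos (cb_pos n) 3) (by positivity) : (0:ℝ) < cb n^3/16^n)]
    rw [abs_of_nonneg (by positivity : (0:ℝ) ≤ (n.choose j : ℝ))]
    rw [abs_pow, abs_pow, abs_of_nonpos hm, abs_of_nonneg (by linarith : (0:ℝ) ≤ -m)]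
    ring
  rw [Finset.sum_congr rfl this, ← Finset.mul_sum, ← add_pow]
  ring_nf

lemma row_bound {m : ℝ} (hm : m ≤ 0) (hm4 : 4*(-m)*(1-m) ≤ 1) (n : ℕ) :
    cb n^3/16^n * (-m)^n * (1-m)^n ≤ gb n := by
  have h2 : (0:ℝ) ≤ (-m)*(1-m) := by nlinarith
  have hcb : (0:ℝ) ≤ cb n^3 := (pow_pos (cb_pos n) 3).le
  calc cb n^3/16^n * (-m)^n * (1-m)^n = cb n^3/64^n * (4*((-m)*(1-m)))^n := by
        rw [mul_pow, mul_pow, show (64:ℝ)^n = 4^n*16^n from by rw [← mul_pow]; norm_num]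
        field_simp
    _ ≤ cb n^3/64^n * 1 := by
        have h3 : (4*((-m)*(1-m)))^n ≤ 1 := by
          apply pow_le_one₀ (by nlinarith)
          linarith
        have hb : (0:ℝ) ≤ cb n^3/64^n := by
          apply div_nonneg hcb (by positivity)
        nlinarith
    _ ≤ gb n := by rw [mul_one]; exact B_le n

lemma Fd_abs_summable {m : ℝ} (hm : m ≤ 0) (hm4 : 4*(-m)*(1-m) ≤ 1) :
    Summable (fun q => |Fd m q|) := by
  rw [summable_prod_of_nonneg (fun q => abs_nonneg _)]
  constructor
  · intro n
    exact summable_of_ne_finset_zero (s := range (n+1))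
      (fun j h => by rw [Fd_vanish m n j h, abs_zero])
  · apply Summable.of_nonneg_of_le (fun n => tsum_nonneg (fun j => abs_nonneg _))
      (fun n => ?_) gb_summable
    rw [Fd_row_abs m hm n]
    exact row_bound hm hm4 n

lemma Fd_summable {m : ℝ} (hm : m ≤ 0) (hm4 : 4*(-m)*(1-m) ≤ 1) : Summable (Fd m) :=
  (Fd_abs_summable hm hm4).of_abs

def psi : ℕ×ℕ → ℕ×ℕ := fun q => (q.1+q.2, q.1)

lemma psi_inj : Function.Injective psi := by
  intro q r h
  simp only [psi, Prod.mk.injEq] at h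
  obtain ⟨h1, h2⟩ := h
  exact Prod.ext h2 (by omega)

noncomputable def Fd2 (m : ℝ) (q : ℕ×ℕ) : ℝ :=
  if q.2 ≤ q.1 then
    cb q.2^3/16^q.2 * m^q.2 * (q.2.choose (q.1-q.2) : ℝ) * (-m)^(q.1-q.2) else 0

lemma Fd2_comp (m : ℝ) (q : ℕ×ℕ) : Fd2 m (psi q) = Fd m q := by
  obtain ⟨n,j⟩ := q
  rw [Fd2, psi]
  simp only
  rw [if_pos (by omega)]
  have e : n + j - n = j := by omega
  rw [e]
  rfl

lemma Fd2_vanish (m : ℝ) : Function.support (Fd2 m) ⊆ Set.range psi := by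
  rintro ⟨N,k⟩ hx
  by_cases h : k ≤ N
  · exact ⟨(k, N-k), by simp only [psi]; exact Prod.ext (by omega) rfl⟩
  · exact absurd (by rw [Fd2, if_neg h]) hx

lemma tsum_Fd2_eq (m : ℝ) : ∑' q, Fd2 m q = ∑' q, Fd m q := by
  rw [← psi_inj.tsum_eq (Fd2_vanish m)]
  exact tsum_congr (fun q => Fd2_comp m q)

lemma Fd2_summable {m : ℝ} (hm : m ≤ 0) (hm4 : 4*(-m)*(1-m) ≤ 1) : Summable (Fd2 m) :=
  (psi_inj.summable_iff (fun x hx => Function.notMem_support.mp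
      (fun hs => hx (Fd2_vanish m hs)))).mp
    ((Fd_summable hm hm4).congr (fun q => (Fd2_comp m q).symm))

lemma Fd2_row (m : ℝ) (N : ℕ) : ∑' k, Fd2 m (N,k) = m^N/16^N * RcS N := by
  rw [tsum_eq_sum (s := range (N+1))
    (fun k hk => by simp only [mem_range] at hk; rw [Fd2, if_neg (by simp only; omega)])]
  rw [RcS, Finset.mul_sum]
  apply Finset.sum_congr rfl
  intro k hk
  simp only [mem_range] at hk
  have hkN : k ≤ N := by omega
  obtain ⟨j, rfl⟩ : ∃ j, N = k + j := ⟨N - k, by omega⟩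
  rw [Fd2, SR]
  simp only
  rw [if_pos hkN, if_pos hkN]
  have e : k + j - k = j := by omega
  rw [e]
  have h16 : ((16:ℝ))^k ≠ 0 := by positivity
  have h16' : ((16:ℝ))^j ≠ 0 := by positivity
  rw [show ((-16:ℝ))^j = (-1)^j * 16^j from by rw [← mul_pow]; norm_num]
  field_simp
  ring

lemma tsum_Fd_eq {m : ℝ} (hm : m ≤ 0) (hm4 : 4*(-m)*(1-m) ≤ 1) :
    ∑' n, (cb n^3/16^n * m^n * (1-m)^n) = ∑' N, m^N/16^N * LcS N := by
  have hS := Fd_summable hm hm4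
  have hS2 := Fd2_summable hm hm4
  calc ∑' n, (cb n^3/16^n * m^n * (1-m)^n)
      = ∑' n, ∑' j, Fd m (n,j) := tsum_congr (fun n => (Fd_row m n).symm)
    _ = ∑' q, Fd m q := (hS.tsum_prod).symm
    _ = ∑' q, Fd2 m q := (tsum_Fd2_eq m).symm
    _ = ∑' N, ∑' k, Fd2 m (N,k) := hS2.tsum_prod
    _ = ∑' N, m^N/16^N * LcS N :=
        tsum_congr (fun N => by rw [Fd2_row, core_identity])

lemma cauchy {m : ℝ} (hm : |m| < 1) :
    (∑' n, poch (1/2) n^2/poch 1 n^2 * m^n) * (∑' n, poch (1/2) n^2/poch 1 n^2 * m^n)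
      = ∑' N, m^N/16^N * LcS N := by
  have hnorm : Summable fun n => ‖poch (1/2) n^2/poch 1 n^2 * m^n‖ := by
    apply Summable.of_nonneg_of_le (fun n => norm_nonneg _) (fun n => ?_)
      (summable_geometric_of_lt_one (abs_nonneg m) hm)
    rw [norm_mul, norm_pow, Real.norm_eq_abs, Real.norm_eq_abs]
    have h1 : |poch (1/2) n^2/poch 1 n^2| ≤ 1 := by
      rw [p_eq, abs_of_nonneg (div_nonneg (sq_nonneg _) (by positivity))]
      rw [div_le_one (by positivity)]
      exact cb_le n
    have h2 : |m|^n ≤ 1^n ⊔ |m|^n := le_max_right _ _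
    calc |poch (1/2) n^2/poch 1 n^2| * |m|^n ≤ 1 * |m|^n := by
          apply mul_le_mul_of_nonneg_right h1 (by positivity)
      _ = |m|^n := one_mul _
  rw [tsum_mul_tsum_eq_tsum_sum_antidiagonal_of_summable_norm hnorm hnorm]
  apply tsum_congr
  intro N
  rw [Finset.Nat.sum_antidiagonal_eq_sum_range_succ_mk, LcS, Finset.mul_sum]
  apply Finset.sum_congr rfl
  intro k hk
  simp only [mem_range] at hk
  have hkN : k ≤ N := by omega
  obtain ⟨j, rfl⟩ : ∃ j, N = k + j := ⟨N - k, by omega⟩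
  simp only
  rw [SL, if_pos hkN]
  have e : k + j - k = j := by omega
  rw [e, p_eq, p_eq]
  have h16 : ((16:ℝ))^k ≠ 0 := by positivity
  have h16' : ((16:ℝ))^j ≠ 0 := by positivity
  field_simp
  ring

end Aux

theorem stmt12 (a : ℝ) (ha0 : 0 ≤ a) (ha1 : a ≤ 1) :
    HasSum (fun n : ℕ => poch (1/2) n ^ 3 / poch 1 n ^ 3 * (-a ^ 2) ^ n)
      ((4 / Real.pi ^ 2) * Ksq ((1 - Real.sqrt (1 + a ^ 2)) / 2) ^ 2) := by
  set s := Real.sqrt (1 + a ^ 2) with hsdef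
  set m := (1 - s)/2 with hmdef
  have hs0 : 0 ≤ s := Real.sqrt_nonneg _
  have hsq : s^2 = 1 + a^2 := Real.sq_sqrt (by positivity)
  have hs1 : 1 ≤ s := by nlinarith
  have hs2 : s ≤ 3/2 := by nlinarith
  have hm0 : m ≤ 0 := by rw [hmdef]; linarith
  have hmlow : -(1/4 : ℝ) ≤ m := by rw [hmdef]; linarith
  have habs : |m| < 1 := abs_lt.mpr ⟨by linarith, by linarith⟩
  have hkey : 4*(-m)*(1-m) = a^2 := by rw [hmdef]; linear_combination hsq
  have hm4 : 4*(-m)*(1-m) ≤ 1 := by rw [hkey]; nlinarith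
  have hfun : (fun n : ℕ => poch (1/2) n ^ 3 / poch 1 n ^ 3 * (-a ^ 2) ^ n)
      = fun n : ℕ => cb n^3/16^n * m^n * (1-m)^n := by
    funext n
    rw [d_eq]
    rw [show (-a^2 : ℝ) = 4*m*(1-m) from by linear_combination hsq]
    rw [show (4*m*(1-m))^n = 4^n * (m^n * (1-m)^n) from by rw [mul_pow, mul_pow]; ring]
    rw [show (64:ℝ)^n = 16^n * 4^n from by rw [← mul_pow]; norm_num]
    have h16 : ((16:ℝ))^n ≠ 0 := by positivity
    have h4 : ((4:ℝ))^n ≠ 0 := by positivity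
    field_simp
  rw [hfun]
  have hrs : Summable (fun n : ℕ => cb n^3/16^n * m^n * (1-m)^n) := by
    apply Summable.of_norm_bounded gb_summable
    intro n
    rw [Real.norm_eq_abs, abs_mul, abs_mul, abs_pow, abs_pow]
    rw [abs_of_nonneg (div_nonneg (pow_pos (cb_pos n) 3).le (by positivity) : (0:ℝ) ≤ cb n^3/16^n)]
    rw [abs_of_nonpos hm0, abs_of_nonneg (by linarith : (0:ℝ) ≤ 1-m)]
    exact row_bound hm0 hm4 n
  have htsum : ∑' n, (cb n^3/16^n * m^n * (1-m)^n)
      = (4/Real.pi^2) * Ksq m ^2 := by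
    rw [tsum_Fd_eq hm0 hm4, ← cauchy habs, Ksq]
    have hpi := Real.pi_ne_zero
    field_simp
    ring
  have := hrs.hasSum
  rwa [htsum] at this
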